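/- (Dual recursion, degree 3.) For all x, y ∈ ℝ², R3(β(x))·ψ3(y) = (1 − x·y)·ψ2(y), where x·y is the Euclidean inner product. -/

import Mathlib

/-- Euclidean inner product on `ℝ²`. -/
def dotR2 (x y : ℝ × ℝ) : ℝ := x.1 * y.1 + x.2 * y.2

/-- The linear polynomial `c_p(y) = 1 − p·y` attached to a point `p`. -/
noncomputable def cpl (p y : ℝ × ℝ) : ℝ := 1 - dotR2 p y

/-- The 12×10 recursion matrix `R1` (with `γj = 2 βj − c`; the paper's `R1` is `c = 1`,
the derivative matrix `U1` is `c = 0`). -/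
noncomputable def R1g (b1 b2 b3 c : ℝ) : Matrix (Fin 12) (Fin 10) ℝ :=
  !![2*b1 - c, 0, 0, 0, 0, 2*(b3 - b2), 4*b2, 0, 0, 0;
     2*b1 - c, 0, 0, 2*(b2 - b3), 0, 0, 4*b3, 0, 0, 0;
     0, 2*b2 - c, 0, 2*(b1 - b3), 0, 0, 0, 4*b3, 0, 0;
     0, 2*b2 - c, 0, 0, 2*(b3 - b1), 0, 0, 4*b1, 0, 0;
     0, 0, 2*b3 - c, 0, 2*(b2 - b1), 0, 0, 0, 4*b1, 0;
     0, 0, 2*b3 - c, 0, 0, 2*(b1 - b2), 0, 0, 4*b2, 0;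
     0, 0, 0, 0, 0, 2*(b3 - b2), 4*(b1 - b3), 0, 0, -3*(2*b1 - c);
     0, 0, 0, 2*(b2 - b3), 0, 0, 4*(b1 - b2), 0, 0, -3*(2*b1 - c);
     0, 0, 0, 2*(b1 - b3), 0, 0, 0, 4*(b2 - b1), 0, -3*(2*b2 - c);
     0, 0, 0, 0, 2*(b3 - b1), 0, 0, 4*(b2 - b3), 0, -3*(2*b2 - c);
     0, 0, 0, 0, 2*(b2 - b1), 0, 0, 0, 4*(b3 - b2), -3*(2*b3 - c);
     0, 0, 0, 0, 0, 2*(b1 - b2), 0, 0, 4*(b3 - b1), -3*(2*b3 - c)]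

/-- The 10×12 recursion matrix `R2` (with `γj = 2 βj − c`). -/
noncomputable def R2g (b1 b2 b3 c : ℝ) : Matrix (Fin 10) (Fin 12) ℝ :=
  !![2*b1 - c, 2*b2, 0, 0, 0, 0, 0, 0, 0, 0, 0, 2*b3;
     0, 0, 0, 2*b1, 2*b2 - c, 2*b3, 0, 0, 0, 0, 0, 0;
     0, 0, 0, 0, 0, 0, 0, 2*b2, 2*b3 - c, 2*b1, 0, 0;
     0, b1 - b3, 3*b3, b2 - b3, 0, 0, 0, 0, 0, 0, 0, 0;
     0, 0, 0, 0, 0, b2 - b1, 3*b1, b3 - b1, 0, 0, 0, 0;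
     0, 0, 0, 0, 0, 0, 0, 0, 0, b3 - b2, 3*b2, b1 - b2;
     0, (b1 - b3)/2, 3*b2/2, 0, 0, 0, 0, 0, 0, 0, 3*b3/2, (b1 - b2)/2;
     0, 0, 3*b1/2, (b2 - b3)/2, 0, (b2 - b1)/2, 3*b3/2, 0, 0, 0, 0, 0;
     0, 0, 0, 0, 0, 0, 3*b2/2, (b3 - b1)/2, 0, (b3 - b2)/2, 3*b1/2, 0;
     0, 0, -(2*b3 - c), 0, 0, 0, -(2*b1 - c), 0, 0, 0, -(2*b2 - c), 0]

/-- The 12×16 recursion matrix `R3` (with `γj = 2 βj − c`). -/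
noncomputable def R3g (b1 b2 b3 c : ℝ) : Matrix (Fin 12) (Fin 16) ℝ :=
  !![2*b1 - c, 2*b2, 0, 0, 0, 0, 0, 0, 0, 0, 0, 2*b3, 0, 0, 0, 0;
     0, b1 - b3, b2, 0, 0, 0, 0, 0, 0, 0, 0, 0, 2*b3, 0, 0, 0;
     0, 0, (b1 + b2)/3, 0, 0, 0, b3/3, 0, 0, 0, b3/3, 0, 2*b1/3, 2*b2/3, 0, b3/3;
     0, 0, b1, b2 - b3, 0, 0, 0, 0, 0, 0, 0, 0, 0, 2*b3, 0, 0;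
     0, 0, 0, 2*b1, 2*b2 - c, 2*b3, 0, 0, 0, 0, 0, 0, 0, 0, 0, 0;
     0, 0, 0, 0, 0, b2 - b1, b3, 0, 0, 0, 0, 0, 0, 2*b1, 0, 0;
     0, 0, b1/3, 0, 0, 0, (b2 + b3)/3, 0, 0, 0, b1/3, 0, 0, 2*b2/3, 2*b3/3, b1/3;
     0, 0, 0, 0, 0, 0, b2, b3 - b1, 0, 0, 0, 0, 0, 0, 2*b1, 0;
     0, 0, 0, 0, 0, 0, 0, 2*b2, 2*b3 - c, 2*b1, 0, 0, 0, 0, 0, 0;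
     0, 0, 0, 0, 0, 0, 0, 0, 0, b3 - b2, b1, 0, 0, 0, 2*b2, 0;
     0, 0, b2/3, 0, 0, 0, b2/3, 0, 0, 0, (b1 + b3)/3, 0, 2*b1/3, 0, 2*b3/3, b2/3;
     0, 0, 0, 0, 0, 0, 0, 0, 0, 0, b3, b1 - b2, 2*b2, 0, 0, 0]

/-- The recursion matrix `R1(β)`. -/
noncomputable def R1 (b1 b2 b3 : ℝ) : Matrix (Fin 12) (Fin 10) ℝ := R1g b1 b2 b3 1
/-- The recursion matrix `R2(β)`. -/
noncomputable def R2 (b1 b2 b3 : ℝ) : Matrix (Fin 10) (Fin 12) ℝ := R2g b1 b2 b3 1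
/-- The recursion matrix `R3(β)`. -/
noncomputable def R3 (b1 b2 b3 : ℝ) : Matrix (Fin 12) (Fin 16) ℝ := R3g b1 b2 b3 1

/-!
Each `c_j = 1 − p_j·y` is affine in `p_j`, so `c4, …, c10` are the corresponding averages of
`c1, c2, c3`, and `1 − x·y = β1 c1 + β2 c2 + β3 c3` because `β1 + β2 + β3 = 1`. Replacing the
constant `1` in `γj = 2βj − 1` by `β1 + β2 + β3` makes both sides homogeneous, and the identity
becomes one between cubic polynomials in `β` and `c1, c2, c3`, checked entry by entry.
-/

lemma cpl_smul_add_smul_add_smul {a b c : ℝ} (habc : a + b + c = 1) (p q r y : ℝ × ℝ) :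
    cpl (a • p + b • q + c • r) y = a * cpl p y + b * cpl q y + c * cpl r y := by
  simp only [cpl, dotR2, Prod.smul_fst, Prod.smul_snd, Prod.fst_add, Prod.snd_add, smul_eq_mul]
  linear_combination -habc

lemma cpl_midpoint (p q y : ℝ × ℝ) : cpl ((2⁻¹ : ℝ) • (p + q)) y = (cpl p y + cpl q y) / 2 := by
  simp only [cpl, dotR2, Prod.smul_fst, Prod.smul_snd, Prod.fst_add, Prod.snd_add, smul_eq_mul]
  ring

lemma cpl_centroid (p q r y : ℝ × ℝ) :
    cpl ((3⁻¹ : ℝ) • (p + q + r)) y = (cpl p y + cpl q y + cpl r y) / 3 := by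
  rw [smul_add, smul_add, cpl_smul_add_smul_add_smul (by norm_num)]
  ring

lemma R3g_mulVec_cubic (b1 b2 b3 c1 c2 c3 c4 c5 c6 c10 : ℝ) (h4 : c4 = (c1 + c2) / 2)
    (h5 : c5 = (c2 + c3) / 2) (h6 : c6 = (c3 + c1) / 2) (h10 : c10 = (c1 + c2 + c3) / 3) :
    (R3g b1 b2 b3 (b1 + b2 + b3)).mulVec
      ![c1 ^ 3, c1 ^ 2 * c4, c1 * c2 * c4, c2 ^ 2 * c4, c2 ^ 3, c2 ^ 2 * c5, c2 * c3 * c5,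
        c3 ^ 2 * c5, c3 ^ 3, c3 ^ 2 * c6, c1 * c3 * c6, c1 ^ 2 * c6, c1 * c4 * c6, c2 * c4 * c5,
        c3 * c5 * c6, c1 * c2 * c3]
      = (b1 * c1 + b2 * c2 + b3 * c3) •
      ![c1 ^ 2, c1 * c4, c4 * c10, c2 * c4, c2 ^ 2, c2 * c5, c5 * c10, c3 * c5, c3 ^ 2,
        c3 * c6, c6 * c10, c1 * c6] := by
  subst h4 h5 h6 h10
  simp only [R3g, Matrix.cons_mulVec, Matrix.cons_dotProduct, Matrix.dotProduct_of_isEmpty,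
    Matrix.head_cons, Matrix.tail_cons, Matrix.empty_mulVec, Matrix.smul_cons, smul_eq_mul,
    Matrix.smul_empty, add_zero, Matrix.vecCons_inj]
  refine ⟨?_, ?_, ?_, ?_, ?_, ?_, ?_, ?_, ?_, ?_, ?_, ?_, trivial⟩ <;> ring

theorem dual_recursion_deg3_general
    (p1 p2 p3 : ℝ × ℝ)
    (p4 p5 p6 p10 : ℝ × ℝ)
    (h4 : p4 = (2⁻¹ : ℝ) • (p1 + p2))
    (h5 : p5 = (2⁻¹ : ℝ) • (p2 + p3))
    (h6 : p6 = (2⁻¹ : ℝ) • (p3 + p1))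
    (h10 : p10 = (3⁻¹ : ℝ) • (p1 + p2 + p3))
    (x y : ℝ × ℝ) (b1 b2 b3 : ℝ)
    (hx : x = b1 • p1 + b2 • p2 + b3 • p3)
    (hb : b1 + b2 + b3 = 1) :
    (R3 b1 b2 b3).mulVec
      ![cpl p1 y ^ 3, cpl p1 y ^ 2 * cpl p4 y, cpl p1 y * cpl p2 y * cpl p4 y,
        cpl p2 y ^ 2 * cpl p4 y, cpl p2 y ^ 3, cpl p2 y ^ 2 * cpl p5 y,
        cpl p2 y * cpl p3 y * cpl p5 y, cpl p3 y ^ 2 * cpl p5 y, cpl p3 y ^ 3,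
        cpl p3 y ^ 2 * cpl p6 y, cpl p1 y * cpl p3 y * cpl p6 y, cpl p1 y ^ 2 * cpl p6 y,
        cpl p1 y * cpl p4 y * cpl p6 y, cpl p2 y * cpl p4 y * cpl p5 y,
        cpl p3 y * cpl p5 y * cpl p6 y, cpl p1 y * cpl p2 y * cpl p3 y]
      = (1 - dotR2 x y) •
      ![cpl p1 y ^ 2, cpl p1 y * cpl p4 y, cpl p4 y * cpl p10 y, cpl p2 y * cpl p4 y,
        cpl p2 y ^ 2, cpl p2 y * cpl p5 y, cpl p5 y * cpl p10 y, cpl p3 y * cpl p5 y,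
        cpl p3 y ^ 2, cpl p3 y * cpl p6 y, cpl p6 y * cpl p10 y, cpl p1 y * cpl p6 y]
      := by
  have hR : R3 b1 b2 b3 = R3g b1 b2 b3 (b1 + b2 + b3) := by rw [hb]; rfl
  have hxy : 1 - dotR2 x y = b1 * cpl p1 y + b2 * cpl p2 y + b3 * cpl p3 y := by
    rw [← cpl, hx, cpl_smul_add_smul_add_smul hb]
  rw [hR, hxy]
  exact R3g_mulVec_cubic _ _ _ _ _ _ _ _ _ _ (by rw [h4, cpl_midpoint])
    (by rw [h5, cpl_midpoint]) (by rw [h6, cpl_midpoint]) (by rw [h10, cpl_centroid])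

/-- dual recursion, degree 3: `R3(β(x)) ψ3(y) = (1 − x·y) ψ2(y)`. -/
theorem dual_recursion_deg3
    (p1 p2 p3 : ℝ × ℝ)
    (hind : AffineIndependent ℝ ![p1, p2, p3])
    (p4 p5 p6 p7 p8 p9 p10 : ℝ × ℝ)
    (h4 : p4 = (2⁻¹ : ℝ) • (p1 + p2))
    (h5 : p5 = (2⁻¹ : ℝ) • (p2 + p3))
    (h6 : p6 = (2⁻¹ : ℝ) • (p3 + p1))
    (h7 : p7 = (2⁻¹ : ℝ) • (p4 + p6))
    (h8 : p8 = (2⁻¹ : ℝ) • (p4 + p5))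
    (h9 : p9 = (2⁻¹ : ℝ) • (p5 + p6))
    (h10 : p10 = (3⁻¹ : ℝ) • (p1 + p2 + p3))
    (x y : ℝ × ℝ) (b1 b2 b3 : ℝ)
    (hx : x = b1 • p1 + b2 • p2 + b3 • p3)
    (hb : b1 + b2 + b3 = 1) :
    (R3 b1 b2 b3).mulVec
      ![cpl p1 y ^ 3, cpl p1 y ^ 2 * cpl p4 y, cpl p1 y * cpl p2 y * cpl p4 y,
        cpl p2 y ^ 2 * cpl p4 y, cpl p2 y ^ 3, cpl p2 y ^ 2 * cpl p5 y,
        cpl p2 y * cpl p3 y * cpl p5 y, cpl p3 y ^ 2 * cpl p5 y, cpl p3 y ^ 3,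
        cpl p3 y ^ 2 * cpl p6 y, cpl p1 y * cpl p3 y * cpl p6 y, cpl p1 y ^ 2 * cpl p6 y,
        cpl p1 y * cpl p4 y * cpl p6 y, cpl p2 y * cpl p4 y * cpl p5 y,
        cpl p3 y * cpl p5 y * cpl p6 y, cpl p1 y * cpl p2 y * cpl p3 y]
      = (1 - dotR2 x y) •
      ![cpl p1 y ^ 2, cpl p1 y * cpl p4 y, cpl p4 y * cpl p10 y, cpl p2 y * cpl p4 y,
        cpl p2 y ^ 2, cpl p2 y * cpl p5 y, cpl p5 y * cpl p10 y, cpl p3 y * cpl p5 y,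
        cpl p3 y ^ 2, cpl p3 y * cpl p6 y, cpl p6 y * cpl p10 y, cpl p1 y * cpl p6 y] :=
  dual_recursion_deg3_general p1 p2 p3 p4 p5 p6 p10 h4 h5 h6 h10 x y b1 b2 b3 hx hb
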